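/- arXiv:1511.00396 — 2 statements merged into one kernel-verified Lean document; each statement's English description precedes it below -/
import Mathlib

section
/- Let K be a field and let 0 → X →f Y →g Z → 0 be a short exact sequence of modules over a K-algebra A. Suppose there exist scalars t₁, t₂ ∈ K with t₁ ≠ t₂ and an automorphism τ of Y such that τ∘f = t₁·f and g∘τ = t₂·g. Then the sequence splits, i.e., f admits a left inverse (equivalently, X is a direct summand of Y). -/
/-!
The endomorphism `σ = τ - t₂ • 1` of `Y` is killed by `g`, so by exactness it factors as
`σ = f ∘ h` for some `h : Y → X`. On the image of `f` it acts as `(t₁ - t₂) • 1`, and since `f` is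
injective this forces `h ∘ f = (t₁ - t₂) • 1`; rescaling `h` gives a retraction of `f`.
-/

namespace LinearMap

variable {R M N P : Type*} [Semiring R] [AddCommMonoid M] [AddCommMonoid N] [AddCommMonoid P]
  [Module R M] [Module R N] [Module R P]

theorem exists_comp_eq_of_range_le {f : M →ₗ[R] N} (hf : Function.Injective f)
    {σ : P →ₗ[R] N} (hσ : range σ ≤ range f) : ∃ h : P →ₗ[R] M, f ∘ₗ h = σ :=
  ⟨(LinearEquiv.ofInjective f hf).symm ∘ₗ σ.codRestrict (range f) fun y ↦ hσ ⟨y, rfl⟩,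
    by ext; simp⟩

theorem inv_smul_comp_eq_id {S : Type*} [GroupWithZero S] [DistribMulAction S M]
    [SMulCommClass R S M] {h : N →ₗ[R] M} {f : M →ₗ[R] N} {c : S} (hc : c ≠ 0)
    (hhf : h ∘ₗ f = c • id) : (c⁻¹ • h) ∘ₗ f = id := by
  ext x
  simp [smul_comp, hhf, inv_smul_smul₀ hc]

theorem exists_leftInverse_of_comp_eq_smul {S : Type*} [GroupWithZero S] [DistribMulAction S M]
    [DistribMulAction S N] [SMulCommClass R S M] [SMulCommClass R S N]
    [CompatibleSMul M N S R] {f : M →ₗ[R] N} {g : N →ₗ[R] P}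
    (hf : Function.Injective f) (hfg : ker g ≤ range f) {σ : N →ₗ[R] N}
    (hgσ : g ∘ₗ σ = 0) {c : S} (hc : c ≠ 0) (hσf : σ ∘ₗ f = c • f) :
    ∃ h : N →ₗ[R] M, h ∘ₗ f = id := by
  obtain ⟨h, rfl⟩ := exists_comp_eq_of_range_le hf ((range_le_ker_iff.mpr hgσ).trans hfg)
  have hhf : h ∘ₗ f = c • id := by
    apply (cancel_left hf).mp
    rw [← comp_assoc, hσf, comp_smul, comp_id]
  exact ⟨c⁻¹ • h, inv_smul_comp_eq_id hc hhf⟩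

end LinearMap

theorem stmt2_general {K : Type*} [Field K] {A : Type*} [Ring A] [Algebra K A]
    {X Y Z : Type*}
    [AddCommGroup X] [AddCommGroup Y] [AddCommGroup Z]
    [Module A X] [Module A Y] [Module A Z]
    [Module K X] [Module K Y] [Module K Z]
    [IsScalarTower K A X] [IsScalarTower K A Y] [IsScalarTower K A Z]
    (f : X →ₗ[A] Y) (g : Y →ₗ[A] Z)
    (hf : Function.Injective f)
    (hfg : LinearMap.range f = LinearMap.ker g)
    (t₁ t₂ : K) (ht : t₁ ≠ t₂) (τ : Y ≃ₗ[A] Y)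
    (h₁ : (τ : Y →ₗ[A] Y) ∘ₗ f = t₁ • f)
    (h₂ : g ∘ₗ (τ : Y →ₗ[A] Y) = t₂ • g) :
    ∃ h : Y →ₗ[A] X, h ∘ₗ f = LinearMap.id := by
  refine LinearMap.exists_leftInverse_of_comp_eq_smul hf hfg.ge
    (σ := (τ : Y →ₗ[A] Y) - t₂ • LinearMap.id) ?_ (sub_ne_zero.mpr ht) ?_
  · rw [LinearMap.comp_sub, h₂, LinearMap.comp_smul, LinearMap.comp_id, sub_self]
  · rw [LinearMap.sub_comp, h₁, LinearMap.smul_comp, LinearMap.id_comp, sub_smul]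

/-- If a short exact sequence 0 → X →f Y →g Z → 0 of modules over a
K-algebra A admits an automorphism τ of Y with τ∘f = t₁·f and g∘τ = t₂·g for
distinct scalars t₁ ≠ t₂ in K, then the sequence splits: f has a left inverse. -/
theorem stmt2 {K : Type*} [Field K] {A : Type*} [Ring A] [Algebra K A]
    {X Y Z : Type*}
    [AddCommGroup X] [AddCommGroup Y] [AddCommGroup Z]
    [Module A X] [Module A Y] [Module A Z]
    [Module K X] [Module K Y] [Module K Z]
    [IsScalarTower K A X] [IsScalarTower K A Y] [IsScalarTower K A Z]
    [SMulCommClass K A Y] [SMulCommClass K A Z]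
    (f : X →ₗ[A] Y) (g : Y →ₗ[A] Z)
    (hf : Function.Injective f) (hg : Function.Surjective g)
    (hfg : LinearMap.range f = LinearMap.ker g)
    (t₁ t₂ : K) (ht : t₁ ≠ t₂) (τ : Y ≃ₗ[A] Y)
    (h₁ : (τ : Y →ₗ[A] Y) ∘ₗ f = t₁ • f)
    (h₂ : g ∘ₗ (τ : Y →ₗ[A] Y) = t₂ • g) :
    ∃ h : Y →ₗ[A] X, h ∘ₗ f = LinearMap.id :=
  stmt2_general f g hf hfg t₁ t₂ ht τ h₁ h₂
end

section
/- Let 0 → X →f Y₁ ⊕ Y₂ →g Z → 0 be a short exact sequence of modules over a ring R, with components f = (f₁, f₂) and g = (g₁, g₂). Suppose s ∈ End(X) and r ∈ End(Z) are idempotents satisfying f₁∘s = 0, f₂∘s = f₂, r∘g₁ = 0, and r∘g₂ = g₂. Then the restricted sequence 0 → im(s) → Y₂ → im(r) → 0, where the first map is x ↦ f₂(x) and the second is y ↦ g₂(y), is a short exact sequence; moreover the original sequence is isomorphic to the direct sum of this sequence with the sequence 0 → ker(s) → Y₁ → ker(r) → 0 obtained from f₁ and the corestriction of g₁. -/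
/-!
An idempotent `s` splits `X` as `ker s ⊕ im s`, and `r` splits `Z` as `ker r ⊕ im r`. The
hypotheses on `f` and `g` say precisely that both maps are diagonal with respect to these
splittings and `Y₁ × Y₂`, so the original sequence is the direct sum of the two restricted ones;
and a direct summand of a short exact sequence is short exact.
-/

open LinearMap Function

section

variable {R : Type*} [Ring R] {E M N : Type*} [AddCommGroup E] [AddCommGroup M] [AddCommGroup N]
  [Module R E] [Module R M] [Module R N] {p q : Submodule R E}

theorem LinearMap.prodMap_restrict_comp_prodEquivOfIsCompl_symm (h : IsCompl p q)
    {φ : E →ₗ[R] M × N} (hq : q ≤ ker (fst R M N ∘ₗ φ)) (hp : p ≤ ker (snd R M N ∘ₗ φ)) :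
    prodMap ((fst R M N ∘ₗ φ) ∘ₗ p.subtype) ((snd R M N ∘ₗ φ) ∘ₗ q.subtype) ∘ₗ
      ((Submodule.prodEquivOfIsCompl p q h).symm : E →ₗ[R] p × q) = φ := by
  refine (LinearEquiv.comp_toLinearMap_symm_eq _ _).mpr (prod_ext ?_ ?_) <;> ext x
  · simp
  · simpa using (hp x.2).symm
  · simpa using (hq x.2).symm
  · simp

theorem LinearMap.prodMap_codRestrict_eq_prodEquivOfIsCompl_symm_comp (h : IsCompl p q)
    {ψ : M × N →ₗ[R] E} (hM : ∀ y, (ψ ∘ₗ inl R M N) y ∈ p) (hN : ∀ y, (ψ ∘ₗ inr R M N) y ∈ q) :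
    prodMap (codRestrict p (ψ ∘ₗ inl R M N) hM) (codRestrict q (ψ ∘ₗ inr R M N) hN) =
      ((Submodule.prodEquivOfIsCompl p q h).symm : E →ₗ[R] p × q) ∘ₗ ψ := by
  refine (LinearEquiv.eq_toLinearMap_symm_comp _ _).mpr (prod_ext ?_ ?_) <;> ext <;> simp

end

theorem Function.Exact.of_prodMap_right {R : Type*} [Ring R]
    {A₁ A₂ B₁ B₂ C₁ C₂ : Type*} [AddCommGroup A₁] [AddCommGroup A₂] [AddCommGroup B₁]
    [AddCommGroup B₂] [AddCommGroup C₁] [AddCommGroup C₂] [Module R A₁] [Module R A₂]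
    [Module R B₁] [Module R B₂] [Module R C₁] [Module R C₂]
    {f₁ : A₁ →ₗ[R] B₁} {f₂ : A₂ →ₗ[R] B₂} {g₁ : B₁ →ₗ[R] C₁} {g₂ : B₂ →ₗ[R] C₂}
    (h : Exact (prodMap f₁ f₂) (prodMap g₁ g₂)) : Exact f₂ g₂ := by
  intro y
  refine ⟨fun hy => ?_, ?_⟩
  · obtain ⟨a, ha⟩ := (h (0, y)).mp (by simp [hy])
    exact ⟨a.2, congrArg Prod.snd ha⟩
  · rintro ⟨a, rfl⟩
    simpa using congrArg Prod.snd ((h (0, f₂ a)).mpr ⟨(0, a), by simp⟩)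

/-- Let 0 → X →f Y₁ ⊕ Y₂ →g Z → 0 be a short exact sequence of
R-modules, with components f = (f₁,f₂), g = (g₁,g₂). Suppose s ∈ End(X),
r ∈ End(Z) are idempotents with f₁∘s = 0, f₂∘s = f₂, r∘g₁ = 0, r∘g₂ = g₂. Then
0 → im(s) → Y₂ → im(r) → 0 (with maps induced by f₂ and g₂) is a short exact
sequence, and the original sequence is isomorphic to the direct sum of this
sequence with 0 → ker(s) → Y₁ → ker(r) → 0 (obtained from f₁ and the
corestriction of g₁). -/
theorem stmt11 {R : Type*} [Ring R] {X Y₁ Y₂ Z : Type*}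
    [AddCommGroup X] [AddCommGroup Y₁] [AddCommGroup Y₂] [AddCommGroup Z]
    [Module R X] [Module R Y₁] [Module R Y₂] [Module R Z]
    (f : X →ₗ[R] Y₁ × Y₂) (g : Y₁ × Y₂ →ₗ[R] Z)
    (hf : Function.Injective f) (hg : Function.Surjective g)
    (hfg : LinearMap.range f = LinearMap.ker g)
    (s : X →ₗ[R] X) (r : Z →ₗ[R] Z)
    (hss : s ∘ₗ s = s) (hrr : r ∘ₗ r = r)
    (hf₁s : (LinearMap.fst R Y₁ Y₂ ∘ₗ f) ∘ₗ s = 0)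
    (hf₂s : (LinearMap.snd R Y₁ Y₂ ∘ₗ f) ∘ₗ s = LinearMap.snd R Y₁ Y₂ ∘ₗ f)
    (hrg₁ : r ∘ₗ (g ∘ₗ LinearMap.inl R Y₁ Y₂) = 0)
    (hrg₂ : r ∘ₗ (g ∘ₗ LinearMap.inr R Y₁ Y₂) = g ∘ₗ LinearMap.inr R Y₁ Y₂) :
    -- exactness of 0 → im(s) → Y₂ → im(r) → 0
    Function.Injective ((LinearMap.snd R Y₁ Y₂ ∘ₗ f) ∘ₗ
        (LinearMap.range s).subtype) ∧
    LinearMap.range ((LinearMap.snd R Y₁ Y₂ ∘ₗ f) ∘ₗ (LinearMap.range s).subtype)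
      = LinearMap.ker (g ∘ₗ LinearMap.inr R Y₁ Y₂) ∧
    LinearMap.range (g ∘ₗ LinearMap.inr R Y₁ Y₂) = LinearMap.range r ∧
    -- the original sequence is the direct sum of the two restricted sequences
    ∃ (eX : X ≃ₗ[R] (↥(LinearMap.ker s) × ↥(LinearMap.range s)))
      (eZ : Z ≃ₗ[R] (↥(LinearMap.ker r) × ↥(LinearMap.range r))),
      (LinearMap.prodMap
          ((LinearMap.fst R Y₁ Y₂ ∘ₗ f) ∘ₗ (LinearMap.ker s).subtype)
          ((LinearMap.snd R Y₁ Y₂ ∘ₗ f) ∘ₗ (LinearMap.range s).subtype)) ∘ₗ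
        (eX : X →ₗ[R] ↥(LinearMap.ker s) × ↥(LinearMap.range s)) = f ∧
      LinearMap.prodMap
          (LinearMap.codRestrict (LinearMap.ker r) (g ∘ₗ LinearMap.inl R Y₁ Y₂)
            (fun y => LinearMap.mem_ker.mpr
              (by simpa using LinearMap.congr_fun hrg₁ y)))
          (LinearMap.codRestrict (LinearMap.range r) (g ∘ₗ LinearMap.inr R Y₁ Y₂)
            (fun y => LinearMap.mem_range.mpr
              ⟨(g ∘ₗ LinearMap.inr R Y₁ Y₂) y, LinearMap.congr_fun hrg₂ y⟩))
        = (eZ : Z →ₗ[R] ↥(LinearMap.ker r) × ↥(LinearMap.range r)) ∘ₗ g := by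
  have hs : IsIdempotentElem s := hss
  have hr : IsIdempotentElem r := hrr
  have hg₁r : ∀ y, (g ∘ₗ inl R Y₁ Y₂) y ∈ ker r := fun y => LinearMap.congr_fun hrg₁ y
  have hg₂r : ∀ y, (g ∘ₗ inr R Y₁ Y₂) y ∈ range r := fun y => ⟨_, LinearMap.congr_fun hrg₂ y⟩
  let eX := (Submodule.prodEquivOfIsCompl _ _ hs.isCompl.symm).symm
  let eZ := (Submodule.prodEquivOfIsCompl _ _ hr.isCompl.symm).symm
  have hf_split := prodMap_restrict_comp_prodEquivOfIsCompl_symm hs.isCompl.symm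
    (range_le_ker_iff.mpr hf₁s) ((hs.comp_eq_left_iff _).mp hf₂s)
  have hg_split := prodMap_codRestrict_eq_prodEquivOfIsCompl_symm_comp hr.isCompl.symm hg₁r hg₂r
  have hinj := hf
  rw [← hf_split, coe_comp, coe_prodMap, LinearEquiv.coe_coe] at hinj
  have hsurj := eZ.surjective.comp hg
  rw [← LinearEquiv.coe_coe, ← coe_comp, ← hg_split, coe_prodMap] at hsurj
  have hexact := exact_iff.mpr hfg.symm
  rw [← hf_split, LinearEquiv.precomp_exact_iff_exact,
    ← LinearEquiv.postcomp_exact_iff_exact (e := eZ), ← hg_split] at hexact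
  refine ⟨(Prod.map_injective.mp (hinj.of_comp_right eX.surjective)).2, ?_, ?_,
    eX, eZ, hf_split, hg_split⟩
  · rw [← ker_codRestrict _ _ hg₂r]
    exact (exact_iff.mp hexact.of_prodMap_right).symm
  · rw [← subtype_comp_codRestrict _ _ hg₂r, range_comp,
      range_eq_top.mpr (Prod.map_surjective.mp hsurj).2, Submodule.map_subtype_top]
end
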